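/- With the setup above, if γ in Γ \ Δ realizes a v-cut over Δ and γ* in Γ \ Δ realizes the same cut as γ over Δ, then γ* also realizes a v-cut over Δ. -/

import Mathlib

open scoped Classical

/-! Hahn groups `ℝ((t^S))` over a linearly ordered set `S`, realized as `HahnSeries Sᵒᵈ ℝ`
(exponents are dualized so that the decreasing series of the classical notation have
well-ordered support), together with developments of elements of an ordered abelian
group `Γ` over a subgroup `Δ` embedded in the Hahn group. -/

variable {S : Type*} [LinearOrder S] {Γ : Type*} [AddCommGroup Γ] [LinearOrder Γ] [IsOrderedAddMonoid Γ]

/-- `a ≺ b` : `n|a| < |b|` for every natural number `n`. -/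
def GPrec (a b : Γ) : Prop := ∀ n : ℕ, n • |a| < |b|

/-- `a ⪯ b` : `|a| < n|b|` for some natural number `n`. -/
def GPreceq (a b : Γ) : Prop := ∃ n : ℕ, |a| < n • |b|

/-- Archimedean equivalence. -/
def GEquiv (a b : Γ) : Prop := GPreceq a b ∧ GPreceq b a

/-- A Hahn series is positive when its leading coefficient is positive. -/
def HPosS (h : HahnSeries Sᵒᵈ ℝ) : Prop :=
  ∃ g, 0 < h.coeff g ∧ ∀ g' < g, h.coeff g' = 0

/-- The (lexicographic) ordering of the Hahn group. -/
def HLtS (h k : HahnSeries Sᵒᵈ ℝ) : Prop := HPosS (k - h)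

/-- `d` is a truncation (initial segment of terms) of the Hahn series `h`. -/
def IsTruncS (d h : HahnSeries Sᵒᵈ ℝ) : Prop :=
  ∃ U : Set S, IsUpperSet U ∧
    ∀ s : S, d.coeff (OrderDual.toDual s) = if s ∈ U then h.coeff (OrderDual.toDual s) else 0

/-- The truncation of `z` keeping all terms with exponent `≥ s`. -/
noncomputable def truncFrom (z : HahnSeries Sᵒᵈ ℝ) (s : S) : HahnSeries Sᵒᵈ ℝ where
  coeff g := if s ≤ OrderDual.ofDual g then z.coeff g else 0
  isPWO_support' := z.isPWO_support.mono (fun g hg => by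
    simp only [Function.mem_support] at hg ⊢
    intro h0
    apply hg
    simp [h0])

variable (Δ : AddSubgroup Γ) (ι : Δ → HahnSeries Sᵒᵈ ℝ)

/-- `ι` is a truncation closed, cross sectional ordered group embedding of `Δ`
into the Hahn group. -/
structure GoodEmbedding : Prop where
  add : ∀ a b : Δ, ι (a + b) = ι a + ι b
  mono : ∀ a b : Δ, ((a : Γ) < b ↔ HLtS (ι a) (ι b))
  trunc_closed : ∀ (d : Δ) (w : HahnSeries Sᵒᵈ ℝ), IsTruncS w (ι d) → ∃ d' : Δ, ι d' = w
  cross : ∀ s : S, ∃ d : Δ, ι d = HahnSeries.single (OrderDual.toDual s) 1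

/-- `z` is a partial development of `y` over `Δ` with respect to `ι`. -/
def IsPartialDev (y : Γ) (z : HahnSeries Sᵒᵈ ℝ) : Prop :=
  ∀ s : S, z.coeff (OrderDual.toDual s) ≠ 0 →
    ∃ d e : Δ, ι d = truncFrom z s ∧ ι e = HahnSeries.single (OrderDual.toDual s) 1 ∧
      GPrec ((d : Γ) - y) (e : Γ)

/-- `z` is the (maximal) development of `y` over `Δ` with respect to `ι`. -/
def IsDevelopment (y : Γ) (z : HahnSeries Sᵒᵈ ℝ) : Prop :=
  IsPartialDev Δ ι y z ∧ ∀ z', IsPartialDev Δ ι y z' → IsTruncS z' z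

/-- `γ ∈ Γ \ Δ` realizes a `v`-cut over `Δ`: its development lies in `ι(Δ)` and the
difference of `γ` with (the preimage of) its development is Archimedean-equivalent to
no element of `Δ`. -/
def RealizesVCut (γ : Γ) : Prop :=
  γ ∉ Δ ∧ ∃ (z : HahnSeries Sᵒᵈ ℝ) (d : Δ), IsDevelopment Δ ι γ z ∧ ι d = z ∧
    ∀ δ : Δ, ¬ GEquiv (γ - (d : Γ)) (δ : Γ)

/-!
Whether `γ ∉ Δ` realizes a `v`-cut depends only on how the Archimedean classes of the
differences `γ - d`, `d ∈ Δ`, compare with those of elements of `Δ`: the development is cut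
out by conditions `d - γ ≺ e` with `d, e ∈ Δ`, and the remaining condition asks that `γ - d`
be Archimedean-equivalent to no element of `Δ`. These comparisons only see the cut of `γ`:
`|γ - d| < δ` with `δ ∈ Δ` places `γ` strictly between `d - δ` and `d + δ`, hence
`|γ* - d| ≤ δ` for every `γ*` in the same cut. To turn this into `n • |γ* - d| < |δ|`, compare
with `|δ| / (n + 1)`, which lies in `Δ` by divisibility.
-/

open ArchimedeanClass

section ArchimedeanRelations

variable {a b : Γ}

-- `ArchimedeanClass.mk` reverses the order: larger elements have smaller classes.
theorem gPrec_iff_mk_lt_mk : GPrec a b ↔ mk b < mk a := mk_lt_mk.symm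

theorem gPreceq_iff_mk_le_mk : GPreceq a b ↔ mk b ≤ mk a ∧ b ≠ 0 := by
  rcases eq_or_ne b 0 with rfl | hb
  · simp [GPreceq]
  · simp [GPreceq, mk_le_mk_iff_lt hb, hb]

theorem gEquiv_iff_mk_eq_mk : GEquiv a b ↔ mk a = mk b ∧ b ≠ 0 := by
  rw [GEquiv, gPreceq_iff_mk_le_mk, gPreceq_iff_mk_le_mk]
  constructor
  · rintro ⟨⟨hba, hb⟩, hab, -⟩
    exact ⟨le_antisymm hab hba, hb⟩
  · rintro ⟨hab, hb⟩
    refine ⟨⟨hab.ge, hb⟩, hab.le, fun ha => hb ?_⟩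
    rw [← mk_eq_top_iff, ← hab, mk_eq_top_iff, ha]

end ArchimedeanRelations

theorem AddSubgroup.abs_mem {G : Type*} [AddCommGroup G] [LinearOrder G] {H : AddSubgroup G}
    {a : G} (ha : a ∈ H) : |a| ∈ H := by
  rcases abs_choice a with h | h <;> rw [h]
  exacts [ha, neg_mem ha]

def SameCut {G : Type*} [AddGroup G] [LT G] (H : AddSubgroup G) (a b : G) : Prop :=
  ∀ d : H, ((d : G) < a ↔ (d : G) < b)

theorem SameCut.symm {G : Type*} [AddGroup G] [LT G] {H : AddSubgroup G} {a b : G}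
    (h : SameCut H a b) : SameCut H b a := fun d => (h d).symm

namespace SameCut

variable {Δ ι} {γ γ' d δ : Γ}

theorem abs_sub_le_of_abs_sub_lt (h : SameCut Δ γ γ') (hd : d ∈ Δ) (hδ : δ ∈ Δ)
    (hlt : |γ - d| < δ) : |γ' - d| ≤ δ := by
  rw [abs_sub_lt_iff] at hlt
  have lower : d - δ < γ' := (h ⟨d - δ, sub_mem hd hδ⟩).1 (sub_lt_comm.1 hlt.2)
  have upper : ¬ d + δ < γ' := fun hup =>
    (lt_asymm ((h ⟨d + δ, add_mem hd hδ⟩).2 hup)) (sub_lt_iff_lt_add'.1 hlt.1)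
  rw [abs_sub_le_iff]
  exact ⟨sub_le_iff_le_add'.2 (not_lt.1 upper), sub_le_comm.1 lower.le⟩

theorem mk_le_mk_sub_of_mk_le (h : SameCut Δ γ γ') (hγ' : γ' ∉ Δ) (hd : d ∈ Δ) (hδ : δ ∈ Δ)
    (hle : mk δ ≤ mk (γ' - d)) : mk δ ≤ mk (γ - d) := by
  have hδ0 : δ ≠ 0 := by
    rintro rfl
    rw [mk_zero, top_le_iff, mk_eq_top_iff, sub_eq_zero] at hle
    exact hγ' (hle ▸ hd)
  obtain ⟨n, hn⟩ := (mk_le_mk_iff_lt hδ0).1 hle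
  have hnδ : n • |δ| ∈ Δ := nsmul_mem (AddSubgroup.abs_mem hδ) n
  exact mk_le_mk.2 ⟨n, h.symm.abs_sub_le_of_abs_sub_lt hd hnδ hn⟩

theorem mk_sub_lt_mk_iff (h : SameCut Δ γ γ') (hγ : γ ∉ Δ) (hγ' : γ' ∉ Δ) (hd : d ∈ Δ)
    (hδ : δ ∈ Δ) : mk (γ - d) < mk δ ↔ mk (γ' - d) < mk δ := by
  simp only [← not_le]
  exact not_congr ⟨h.symm.mk_le_mk_sub_of_mk_le hγ hd hδ, h.mk_le_mk_sub_of_mk_le hγ' hd hδ⟩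

theorem mk_lt_mk_sub_of_mk_lt (h : SameCut Δ γ γ')
    (hΔdiv : ∀ n : ℕ, 0 < n → ∀ d ∈ Δ, ∃ d' ∈ Δ, n • d' = d) (hd : d ∈ Δ) (hδ : δ ∈ Δ)
    (hlt : mk δ < mk (γ - d)) : mk δ < mk (γ' - d) := by
  rw [mk_lt_mk] at hlt ⊢
  intro n
  obtain ⟨c, hc, hnc⟩ := hΔdiv (n + 1) n.succ_pos |δ| (AddSubgroup.abs_mem hδ)
  have hγc : |γ - d| < c := lt_of_nsmul_lt_nsmul_right (n + 1) (hnc ▸ hlt (n + 1))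
  calc n • |γ' - d| ≤ n • c := nsmul_le_nsmul_right (h.abs_sub_le_of_abs_sub_lt hd hc hγc) n
    _ < (n + 1) • c := nsmul_lt_nsmul_left ((abs_nonneg _).trans_lt hγc) n.lt_succ_self
    _ = |δ| := hnc

theorem mk_lt_mk_sub_iff (h : SameCut Δ γ γ')
    (hΔdiv : ∀ n : ℕ, 0 < n → ∀ d ∈ Δ, ∃ d' ∈ Δ, n • d' = d) (hd : d ∈ Δ) (hδ : δ ∈ Δ) :
    mk δ < mk (γ - d) ↔ mk δ < mk (γ' - d) :=
  ⟨h.mk_lt_mk_sub_of_mk_lt hΔdiv hd hδ, h.symm.mk_lt_mk_sub_of_mk_lt hΔdiv hd hδ⟩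

theorem gEquiv_sub_iff (h : SameCut Δ γ γ')
    (hΔdiv : ∀ n : ℕ, 0 < n → ∀ d ∈ Δ, ∃ d' ∈ Δ, n • d' = d) (hγ : γ ∉ Δ) (hγ' : γ' ∉ Δ)
    (hd : d ∈ Δ) (hδ : δ ∈ Δ) : GEquiv (γ - d) δ ↔ GEquiv (γ' - d) δ := by
  simp only [gEquiv_iff_mk_eq_mk, le_antisymm_iff (a := mk (_ - d)), ← not_lt,
    h.mk_sub_lt_mk_iff hγ hγ' hd hδ, h.mk_lt_mk_sub_iff hΔdiv hd hδ]

theorem isPartialDev_iff (h : SameCut Δ γ γ')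
    (hΔdiv : ∀ n : ℕ, 0 < n → ∀ d ∈ Δ, ∃ d' ∈ Δ, n • d' = d)
    (z : HahnSeries Sᵒᵈ ℝ) : IsPartialDev Δ ι γ z ↔ IsPartialDev Δ ι γ' z := by
  have hprec (d e : Δ) : GPrec ((d : Γ) - γ) e ↔ GPrec ((d : Γ) - γ') e := by
    simp only [gPrec_iff_mk_lt_mk, mk_sub_comm (d : Γ), h.mk_lt_mk_sub_iff hΔdiv d.2 e.2]
  simp only [IsPartialDev, hprec]

theorem isDevelopment_iff (h : SameCut Δ γ γ')
    (hΔdiv : ∀ n : ℕ, 0 < n → ∀ d ∈ Δ, ∃ d' ∈ Δ, n • d' = d)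
    (z : HahnSeries Sᵒᵈ ℝ) : IsDevelopment Δ ι γ z ↔ IsDevelopment Δ ι γ' z := by
  simp only [IsDevelopment, h.isPartialDev_iff hΔdiv]

end SameCut

theorem vCut_depends_only_on_cut
    (hΔdiv : ∀ n : ℕ, 0 < n → ∀ d ∈ Δ, ∃ d' ∈ Δ, n • d' = d)
    (γ γstar : Γ) (hγ : RealizesVCut Δ ι γ)
    (hγs : γstar ∉ Δ)
    (hcut : ∀ d : Δ, ((d : Γ) < γ ↔ (d : Γ) < γstar)) :
    RealizesVCut Δ ι γstar := by
  obtain ⟨hγΔ, z, d, hdev, hιd, hnot⟩ := hγ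
  have hsame : SameCut Δ γ γstar := hcut
  refine ⟨hγs, z, d, (hsame.isDevelopment_iff hΔdiv z).1 hdev, hιd, fun δ => ?_⟩
  rw [← hsame.gEquiv_sub_iff hΔdiv hγΔ hγs d.2 δ.2]
  exact hnot δ
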